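/- arXiv:2506.16610 — 7 statements merged into one kernel-verified Lean document; each statement's English description precedes it below -/
import Mathlib

section
/- Let $g = \mathrm{diag}(\gamma_1,\dots,\gamma_n)$ be a diagonal unitary matrix, $x$ a Hermitian matrix, and suppose $x - g^{-1} x g = \bar\varphi \varphi^t - cI$ with $c > 0$ and $|\varphi_i|^2 = c$ for all $i$. Then $\gamma_i \neq \gamma_j$ for all $i \neq j$. -/
open Matrix Finset Complex in
theorem gamma_distinct_of_moment_map (n : ℕ) (γ : Fin n → ℂ) (hγ : ∀ i, ‖γ i‖ = 1)
    (x : Matrix (Fin n) (Fin n) ℂ) (hx : x.IsHermitian)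
    (φ : Fin n → ℂ) (c : ℝ) (hc : 0 < c) (hφ : ∀ i, Complex.normSq (φ i) = c)
    (hmom : x - (Matrix.diagonal fun i => (γ i)⁻¹) * x * Matrix.diagonal γ
        = Matrix.of (fun i j => (starRingEnd ℂ) (φ i) * φ j) - (c : ℂ) • 1) :
    ∀ i j, i ≠ j → γ i ≠ γ j := by
  intro i j hij hgamma
  have hentry := congrFun (congrFun hmom i) j
  have hγi : γ i ≠ 0 := by
    intro h
    have := hγ i
    rw [h] at this
    simp at this
  simp only [Matrix.sub_apply, Matrix.mul_apply, Matrix.diagonal_mul, Matrix.mul_diagonal,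
    Matrix.of_apply, Matrix.smul_apply, Matrix.one_apply_ne hij, smul_zero,
    Matrix.diagonal_apply] at hentry
  simp only [ite_mul, zero_mul, Finset.sum_ite_eq, Finset.mem_univ, if_true,
    mul_ite, mul_zero, Finset.sum_ite_eq', Finset.sum_ite_eq] at hentry
  rw [← hgamma, mul_comm ((γ i)⁻¹) (x i j), mul_assoc, inv_mul_cancel₀ hγi, mul_one, sub_self, sub_zero] at hentry
  have hφi : φ i ≠ 0 := by
    intro h
    have := hφ i
    rw [h] at this
    simp at this
    linarith
  have hφj : φ j ≠ 0 := by
    intro h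
    have := hφ j
    rw [h] at this
    simp at this
    linarith
  have : (starRingEnd ℂ) (φ i) * φ j ≠ 0 :=
    mul_ne_zero (by simpa using hφi) hφj
  exact this hentry.symm
end

section
/- Let $g = \mathrm{diag}(\gamma_1,\dots,\gamma_n)$ be diagonal unitary with distinct entries, $x$ Hermitian, $\varphi \in \mathbb{C}^n$, $c>0$, and suppose $x - g^{-1}xg = \bar\varphi\varphi^t - cI$. Then $|\varphi_i|^2 = c$ for all $i$, and for $i \neq j$, $x_{ij}(1 - \gamma_i^{-1}\gamma_j) = \overline{\varphi_i}\varphi_j$. -/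
open Matrix Finset Complex in
theorem moment_map_diagonal_gauge (n : ℕ) (γ : Fin n → ℂ) (hγ : ∀ i, ‖γ i‖ = 1)
    (hdist : ∀ i j, i ≠ j → γ i ≠ γ j)
    (x : Matrix (Fin n) (Fin n) ℂ) (hx : x.IsHermitian)
    (φ : Fin n → ℂ) (c : ℝ) (hc : 0 < c)
    (hmom : x - (Matrix.diagonal fun i => (γ i)⁻¹) * x * Matrix.diagonal γ
        = Matrix.of (fun i j => (starRingEnd ℂ) (φ i) * φ j) - (c : ℂ) • 1) :
    (∀ i, Complex.normSq (φ i) = c) ∧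
      (∀ i j, i ≠ j → x i j * (1 - (γ i)⁻¹ * γ j) = (starRingEnd ℂ) (φ i) * φ j) := by
  have key : ∀ i j, x i j - (γ i)⁻¹ * x i j * γ j
      = (starRingEnd ℂ) (φ i) * φ j - (c : ℂ) * (if i = j then 1 else 0) := by
    intro i j
    have h := congrFun (congrFun hmom i) j
    simpa [Matrix.sub_apply, Matrix.diagonal_mul, Matrix.mul_diagonal,
      Matrix.smul_apply, Matrix.one_apply, mul_comm, mul_assoc, mul_left_comm] using h
  constructor
  · intro i
    have hne : γ i ≠ 0 := fun h0 => by simpa [h0] using hγ i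
    have h := key i i
    have hcancel : (γ i)⁻¹ * x i i * γ i = x i i := by
      field_simp
    rw [hcancel] at h
    simp only [sub_self, if_true, eq_self_iff_true, mul_one] at h
    have : (starRingEnd ℂ) (φ i) * φ i = (c : ℂ) := by linear_combination -h
    have := congrArg Complex.re this
    simpa [Complex.normSq_apply, Complex.mul_re] using this
  · intro i j hij
    have h := key i j
    rw [if_neg hij] at h
    ring_nf
    ring_nf at h
    linear_combination h
end

section
/- Let $x = \mathrm{diag}(x_1,\dots,x_n)$ be a real diagonal matrix, $g \in U(n)$, $\psi \in \mathbb{C}^n$, $c > 0$, and suppose $g^{-1} x g = x + cI - \bar\psi\psi^t$. Then for each $i$, $\prod_{j=1}^n (x_i - x_j + c) = |\psi_i|^2 \prod_{j \neq i}(x_i - x_j)$, provided the $x_j$ are distinct. -/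
/-!
Evaluate the characteristic polynomial of both sides of the moment map equation at
`z = x_i + c`. Conjugation does not change it, so the left side gives `∏ j (x_i - x_j + c)`;
the right side is `det (diag (x_i - x_j) + ψ̄ ψᵀ)`, a diagonal matrix with a zero in position `i`
plus a rank-one matrix, whose determinant is `ψ̄_i ψ_i ∏_{j ≠ i} (x_i - x_j)`.
-/

open Matrix Finset

section
variable {ι R : Type*} [Fintype ι] [DecidableEq ι] [CommRing R]

theorem det_diagonal_updateRow (d b : ι → R) (i : ι) :
    ((diagonal d).updateRow i b).det = b i * ∏ j ∈ univ.erase i, d j := by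
  rw [← cramer_transpose_apply, diagonal_transpose, cramer_eq_adjugate_mulVec,
    adjugate_diagonal, mulVec_diagonal, mul_comm]

theorem det_diagonal_add_vecMulVec_of_eq_zero (d a b : ι → R) {i : ι} (hdi : d i = 0) :
    (diagonal d + vecMulVec a b).det = a i * b i * ∏ j ∈ univ.erase i, d j := by
  set N := diagonal d + vecMulVec a b
  have hrow : N i = a i • b := by
    ext k
    by_cases hk : i = k
    · subst hk; simp [N, vecMulVec_apply, hdi]
    · simp [N, vecMulVec_apply, diagonal_apply_ne _ hk]
  -- subtracting `a j` times row `i` from each row `j ≠ i` leaves the diagonal rows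
  have hreduce : (N.updateRow i b).det = ((diagonal d).updateRow i b).det := by
    refine det_eq_of_forall_row_eq_smul_add_const (fun j => if j = i then 0 else a j) i
      (by simp) fun j k => ?_
    by_cases hj : j = i
    · subst hj; simp
    · simp [N, hj, vecMulVec_apply]
  calc N.det = (N.updateRow i (a i • b)).det := by rw [← hrow, updateRow_eq_self]
    _ = a i * ((diagonal d).updateRow i b).det := by rw [det_updateRow_smul, hreduce]
    _ = a i * b i * ∏ j ∈ univ.erase i, d j := by rw [det_diagonal_updateRow, mul_assoc]

theorem prod_sub_add_eq_of_conj_diagonal_eq {M : Matrix ι ι R} (hM : IsUnit M) {d u v : ι → R}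
    {c : R} (h : M⁻¹ * diagonal d * M = diagonal d + c • 1 - vecMulVec u v) (i : ι) :
    ∏ j, (d i - d j + c) = u i * v i * ∏ j ∈ univ.erase i, (d i - d j) := by
  have hshift : diagonal (fun j => d i - d j) + vecMulVec u v
      = M⁻¹ * diagonal (fun j => d i - d j + c) * M := by
    have hdiag : diagonal (fun j => d i - d j + c) = (d i + c) • 1 - diagonal d := by
      ext j k; by_cases hjk : j = k <;> simp [hjk]; ring
    rw [hdiag, Matrix.mul_sub, Matrix.sub_mul, Matrix.mul_smul, Matrix.mul_one, Matrix.smul_mul,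
      nonsing_inv_mul _ ((isUnit_iff_isUnit_det M).mp hM), h]
    ext j k; by_cases hjk : j = k <;> simp [hjk, vecMulVec_apply]; ring
  rw [← det_diagonal (d := fun j => d i - d j + c), ← det_conj' hM, ← hshift,
    det_diagonal_add_vecMulVec_of_eq_zero (fun j => d i - d j) u v (sub_self (d i))]

end

open Matrix Finset Complex in
theorem char_poly_identity_at_shifted_eigenvalue_general (n : ℕ) (x : Fin n → ℝ)
    (g : Matrix (Fin n) (Fin n) ℂ) (hg : g ∈ Matrix.unitaryGroup (Fin n) ℂ)
    (ψ : Fin n → ℂ) (c : ℝ)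
    (hmom : g⁻¹ * (Matrix.diagonal fun i => (x i : ℂ)) * g
        = (Matrix.diagonal fun i => (x i : ℂ)) + (c : ℂ) • 1
          - Matrix.of (fun i j => (starRingEnd ℂ) (ψ i) * ψ j)) :
    ∀ i, (∏ j, ((x i : ℂ) - x j + c))
      = (Complex.normSq (ψ i) : ℂ) * ∏ j ∈ univ.erase i, ((x i : ℂ) - x j) := by
  intro i
  rw [normSq_eq_conj_mul_self]
  exact prod_sub_add_eq_of_conj_diagonal_eq (Unitary.isUnit_coe (U := ⟨g, hg⟩)) hmom i

open Matrix Finset Complex in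
theorem char_poly_identity_at_shifted_eigenvalue (n : ℕ) (x : Fin n → ℝ)
    (hx : ∀ i j, i ≠ j → x i ≠ x j)
    (g : Matrix (Fin n) (Fin n) ℂ) (hg : g ∈ Matrix.unitaryGroup (Fin n) ℂ)
    (ψ : Fin n → ℂ) (c : ℝ) (hc : 0 < c)
    (hmom : g⁻¹ * (Matrix.diagonal fun i => (x i : ℂ)) * g
        = (Matrix.diagonal fun i => (x i : ℂ)) + (c : ℂ) • 1
          - Matrix.of (fun i j => (starRingEnd ℂ) (ψ i) * ψ j)) :
    ∀ i, (∏ j, ((x i : ℂ) - x j + c))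
      = (Complex.normSq (ψ i) : ℂ) * ∏ j ∈ univ.erase i, ((x i : ℂ) - x j) :=
  char_poly_identity_at_shifted_eigenvalue_general n x g hg ψ c hmom
end

section
/- Let $x_1 \geq x_2 \geq \dots \geq x_n$ be real numbers with distinct values, $c > 0$, and suppose for all $i$ that $|\psi_i|^2 := c\prod_{j\neq i}\frac{x_i - x_j + c}{x_i - x_j} \geq 0$ where $\psi$ satisfies $\prod_j(x_i - x_j + c) = |\psi_i|^2 \prod_{j\neq i}(x_i - x_j)$. Then $x_i - x_{i+1} \geq c$ for all $i = 1,\dots,n-1$; moreover $x_k - x_{k+1} = c$ if and only if $|\psi_{k+1}|^2 = 0$. -/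
/-!
Split off the factor `k = i` from the product defining `|ψ_j|²`, where `i` is the predecessor
of `j`: it equals `(x_i - x_j - c) / (x_i - x_j)`, whose sign is that of the gap `x_i - x_j - c`.
Every other factor `(x_j - x_k + c) / (x_j - x_k)` is positive: for `k > j` numerator and
denominator are positive, and for `k < i` both are negative as soon as the earlier gap
`x_k - x_{k+1} ≥ c` is known. Strong induction along the sequence gives all gaps.
-/

open Finset

noncomputable def psiSq {n : ℕ} (x : Fin n → ℝ) (c : ℝ) (i : Fin n) : ℝ :=
  c * ∏ j ∈ univ.erase i, (x i - x j + c) / (x i - x j)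

lemma div_add_self_pos {c d : ℝ} (hc : 0 ≤ c) (hd : 0 < d ∨ d + c < 0) : 0 < (d + c) / d := by
  rcases hd with hd | hd
  · exact div_pos (by linarith) hd
  · exact div_pos_of_neg_of_neg hd (by linarith)

section Sequence

variable {n : ℕ} {x : Fin n → ℝ} {c : ℝ}

lemma add_lt_of_gaps (hx : StrictAnti x) {i j : Fin n} (hij : i < j)
    (hgaps : ∀ k < i, ∀ l : Fin n, (k : ℕ) + 1 = l → c ≤ x k - x l) :
    ∀ k < i, x j + c < x k := by
  intro k hki
  let l : Fin n := ⟨k + 1, by omega⟩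
  have hli : l ≤ i := Fin.le_def.mpr hki
  linarith [hgaps k hki l rfl, hx.antitone hli, hx hij]

lemma prod_erase_erase_pos (hx : StrictAnti x) (hc : 0 ≤ c) {i j : Fin n}
    (hij : (i : ℕ) + 1 = j) (hfar : ∀ k < i, x j + c < x k) :
    0 < ∏ k ∈ (univ.erase j).erase i, (x j - x k + c) / (x j - x k) := by
  refine prod_pos fun k hk => div_add_self_pos hc ?_
  obtain ⟨hki, hkj, -⟩ : k ≠ i ∧ k ≠ j ∧ _ := by simpa only [mem_erase] using hk
  rcases lt_or_gt_of_ne hki with hlt | hgt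
  · exact Or.inr (by linarith [hfar k hlt])
  · have hjk : j < k := by
      rw [Fin.lt_def] at hgt ⊢; have := Fin.val_ne_of_ne hkj; omega
    exact Or.inl (sub_pos.mpr (hx hjk))

lemma psiSq_eq_mul_gap (hx : StrictAnti x) (hc : 0 < c) {i j : Fin n}
    (hij : (i : ℕ) + 1 = j) (hfar : ∀ k < i, x j + c < x k) :
    ∃ K > 0, psiSq x c j = K * (x i - x j - c) := by
  have hlt : i < j := by rw [Fin.lt_def]; omega
  have hg : 0 < x i - x j := sub_pos.mpr (hx hlt)
  have hP := prod_erase_erase_pos hx hc.le hij hfar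
  have hsplit : psiSq x c j = c * ((x j - x i + c) / (x j - x i) *
      ∏ k ∈ (univ.erase j).erase i, (x j - x k + c) / (x j - x k)) := by
    rw [psiSq, mul_prod_erase _ (fun k ↦ (x j - x k + c) / (x j - x k))
      (mem_erase.mpr ⟨hlt.ne, mem_univ i⟩)]
  generalize ∏ k ∈ (univ.erase j).erase i, (x j - x k + c) / (x j - x k) = P at hP hsplit
  refine ⟨c / (x i - x j) * P, by positivity, ?_⟩
  have : x j - x i ≠ 0 := by linarith
  rw [hsplit]
  field_simp
  ring

lemma gap_le_of_psiSq_nonneg (hx : StrictAnti x) (hc : 0 < c) (hnonneg : ∀ i, 0 ≤ psiSq x c i) :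
    ∀ i j : Fin n, (i : ℕ) + 1 = j → c ≤ x i - x j := by
  intro i
  induction i using WellFoundedLT.induction with
  | _ i ih =>
    intro j hij
    have hlt : i < j := by rw [Fin.lt_def]; omega
    obtain ⟨K, hK, hψ⟩ := psiSq_eq_mul_gap hx hc hij (add_lt_of_gaps hx hlt ih)
    have := hnonneg j
    rw [hψ] at this
    linarith [(mul_nonneg_iff_of_pos_left hK).mp this]

end Sequence

theorem gap_conditions_iff_psi_sq_nonneg (n : ℕ) (x : Fin n → ℝ) (hmono : StrictAnti x)
    (c : ℝ) (hc : 0 < c)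
    (ψsq : Fin n → ℝ)
    (hψ : ∀ i, ψsq i = c * ∏ j ∈ univ.erase i, (x i - x j + c) / (x i - x j))
    (hnonneg : ∀ i, 0 ≤ ψsq i) :
    ∀ i j : Fin n, (i : ℕ) + 1 = (j : ℕ) →
      x i - x j ≥ c ∧ (x i - x j = c ↔ ψsq j = 0) := by
  obtain rfl : ψsq = psiSq x c := funext hψ
  have hgaps := gap_le_of_psiSq_nonneg hmono hc hnonneg
  intro i j hij
  have hlt : i < j := by rw [Fin.lt_def]; omega
  obtain ⟨K, hK, hψj⟩ :=
    psiSq_eq_mul_gap hmono hc hij (add_lt_of_gaps hmono hlt fun k _ ↦ hgaps k)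
  refine ⟨hgaps i j hij, ?_⟩
  rw [hψj, mul_eq_zero, or_iff_right hK.ne', sub_eq_zero]
end

section
/- Let $x_1 > x_2 > \dots > x_n$ with $x_i - x_{i+1} > c > 0$, define $|\psi_i|^2 = c\prod_{j\neq i}\frac{x_i - x_j + c}{x_i - x_j}$ and $|\lambda_i|^2 = c\prod_{j\neq i}\frac{x_j - x_i + c}{x_j - x_i}$. Then the real matrix $X$ with entries $X_{ij} = \frac{|\lambda_i||\psi_j|}{x_j - x_i + c}$ is orthogonal: $X X^t = I$. -/
/-!
Put `yᵢ = xᵢ - c`, `Q = ∏ⱼ (X - xⱼ)`, `P = ∏ₘ (X - yₘ)` and `Pᵢ = P / (X - yᵢ)`. Then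
`ψⱼ² = P(xⱼ) / Q'(xⱼ)` and `λᵢ² = -Q(yᵢ) / Pᵢ(yᵢ)` (here `1 / Q'(xⱼ)` is `Lagrange.nodalWeight`),
so `(X Xᵀ)ᵢₖ = λᵢ λₖ ∑ⱼ Pᵢ(xⱼ) / (Q'(xⱼ) (xⱼ - yₖ))`. As `deg Pᵢ < n`, the partial fraction
expansion of `Pᵢ / Q` evaluates this sum to `-Pᵢ(yₖ) / Q(yₖ)`, which vanishes for `k ≠ i` because
`yₖ` is a root of `Pᵢ`, and cancels `λᵢ²` for `k = i`. The positivity of the products under the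
square roots comes from the gaps exceeding `c`.
-/

open Finset Polynomial

namespace Lagrange

variable {F ι : Type*} [Field F] [DecidableEq ι] {s : Finset ι} {v : ι → F}

theorem sum_nodalWeight_mul_eval_div_sub (hvs : Set.InjOn v s) {P : F[X]} (hP : P.degree < #s)
    {z : F} (hz : ∀ i ∈ s, z ≠ v i) :
    ∑ i ∈ s, nodalWeight s v i * P.eval (v i) / (z - v i) = P.eval z / (nodal s v).eval z := by
  rw [eq_div_iff (eval_nodal_not_at_node hz), mul_comm]
  conv_rhs => rw [eq_interpolate hvs hP, eval_interpolate_not_at_node _ hz]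
  simp only [div_eq_mul_inv, mul_right_comm]

end Lagrange

open Lagrange

section Cauchy

variable {K ι : Type*} [Field K] [Fintype ι] [DecidableEq ι] {x y : ι → K}

theorem sum_eval_nodal_mul_nodalWeight_div (hx : Function.Injective x) (hxy : ∀ j k, x j ≠ y k)
    (i k : ι) :
    ∑ j, (nodal univ y).eval (x j) * nodalWeight univ x j / ((x j - y i) * (x j - y k)) =
      -((nodal (univ.erase i) y).eval (y k) / (nodal univ x).eval (y k)) := by
  have hdeg : (nodal (univ.erase i) y).degree < #(univ : Finset ι) := by
    rw [degree_nodal, Nat.cast_lt]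
    exact card_erase_lt_of_mem (mem_univ i)
  rw [← sum_nodalWeight_mul_eval_div_sub hx.injOn hdeg fun j _ => (hxy j k).symm,
    ← sum_neg_distrib]
  refine sum_congr rfl fun j _ => ?_
  have hji : x j - y i ≠ 0 := sub_ne_zero.mpr (hxy j i)
  have hjk : x j - y k ≠ 0 := sub_ne_zero.mpr (hxy j k)
  have hkj : y k - x j ≠ 0 := sub_ne_zero.mpr (hxy j k).symm
  rw [nodal_eq_mul_nodal_erase (mem_univ i), eval_mul, eval_sub, eval_X, eval_C]
  field_simp
  ring

theorem cauchy_mul_transpose_eq_one (hx : Function.Injective x) (hy : Function.Injective y)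
    (hxy : ∀ j k, x j ≠ y k) {s t : ι → K}
    (hs : ∀ i, s i * s i = -(nodal univ x).eval (y i) * nodalWeight univ y i)
    (ht : ∀ j, t j * t j = (nodal univ y).eval (x j) * nodalWeight univ x j)
    (M : Matrix ι ι K) (hM : ∀ i j, M i j = s i * t j / (x j - y i)) :
    M * M.transpose = 1 := by
  ext i k
  have hsum : ∑ j, s i * t j / (x j - y i) * (s k * t j / (x j - y k)) =
      s i * s k * -((nodal (univ.erase i) y).eval (y k) / (nodal univ x).eval (y k)) := by
    rw [← sum_eval_nodal_mul_nodalWeight_div hx hxy, mul_sum]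
    refine sum_congr rfl fun j _ => ?_
    rw [← ht, div_mul_div_comm]
    ring
  simp only [Matrix.mul_apply, Matrix.transpose_apply, hM, Matrix.one_apply, hsum]
  split_ifs with hik
  · subst hik
    have hxi : (nodal univ x).eval (y i) ≠ 0 :=
      eval_nodal_not_at_node fun j _ => (hxy j i).symm
    rw [hs, nodalWeight_eq_eval_nodal_erase_inv]
    have hyi : (nodal (univ.erase i) y).eval (y i) ≠ 0 :=
      eval_nodal_not_at_node fun m hm => hy.ne (mem_erase.mp hm).1.symm
    field_simp
  · rw [eval_nodal_at_node (mem_erase.mpr ⟨Ne.symm hik, mem_univ k⟩)]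
    simp

end Cauchy

section Residues

variable {K ι : Type*} [Field K] [Fintype ι] [DecidableEq ι] (x : ι → K) (c : K) (i : ι)

theorem mul_prod_div_eq_eval_nodal_mul_nodalWeight :
    c * ∏ j ∈ univ.erase i, (x i - x j + c) / (x i - x j) =
      (nodal univ (x · - c)).eval (x i) * nodalWeight univ x i := by
  rw [eval_nodal, ← mul_prod_erase univ _ (mem_univ i), nodalWeight, prod_div_distrib,
    div_eq_mul_inv, ← prod_inv_distrib]
  simp only [sub_sub_cancel, sub_sub_eq_add_sub, sub_add_eq_add_sub, mul_assoc]

theorem mul_prod_div_eq_neg_eval_nodal_mul_nodalWeight :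
    c * ∏ j ∈ univ.erase i, (x j - x i + c) / (x j - x i) =
      -(nodal univ x).eval (x i - c) * nodalWeight univ (x · - c) i := by
  have hfactor (j : ι) :
      (x j - x i + c) / (x j - x i) = (x i - c - x j) * (x i - c - (x j - c))⁻¹ := by
    rw [← div_eq_mul_inv, ← neg_div_neg_eq]
    ring_nf
  rw [prod_congr rfl fun j _ => hfactor j, prod_mul_distrib, eval_nodal,
    ← mul_prod_erase univ _ (mem_univ i), nodalWeight]
  ring

end Residues

section Gaps

variable {n : ℕ} {x : Fin n → ℝ} {c : ℝ}

theorem lt_sub_of_gap (hc : 0 < c) (hgap : ∀ i j : Fin n, (i : ℕ) + 1 = (j : ℕ) → x i - x j > c)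
    {i j : Fin n} (hij : i < j) : c < x i - x j := by
  obtain ⟨j, hj⟩ := j
  replace hij : (i : ℕ) + 1 ≤ j := hij
  induction j, hij using Nat.le_induction with
  | base => exact hgap _ _ rfl
  | succ k hik ih =>
    have hstep := hgap ⟨k, by omega⟩ ⟨k + 1, hj⟩ rfl
    have hprev := ih (by omega)
    linarith

theorem injective_of_gap (hc : 0 < c)
    (hgap : ∀ i j : Fin n, (i : ℕ) + 1 = (j : ℕ) → x i - x j > c) : Function.Injective x := by
  intro i j hij
  by_contra hne
  rcases lt_or_gt_of_ne hne with h | h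
  · linarith [lt_sub_of_gap hc hgap h]
  · linarith [lt_sub_of_gap hc hgap h]

theorem ne_sub_of_gap (hc : 0 < c)
    (hgap : ∀ i j : Fin n, (i : ℕ) + 1 = (j : ℕ) → x i - x j > c) (j k : Fin n) :
    x j ≠ x k - c := by
  intro h
  rcases lt_trichotomy j k with hjk | rfl | hkj
  · linarith [lt_sub_of_gap hc hgap hjk]
  · linarith
  · linarith [lt_sub_of_gap hc hgap hkj]

theorem div_pos_of_gap (hc : 0 < c)
    (hgap : ∀ i j : Fin n, (i : ℕ) + 1 = (j : ℕ) → x i - x j > c) {i j : Fin n} (hij : i ≠ j) :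
    0 < (x i - x j + c) / (x i - x j) := by
  rcases lt_or_gt_of_ne hij with h | h
  · have := lt_sub_of_gap hc hgap h
    exact div_pos (by linarith) (by linarith)
  · have := lt_sub_of_gap hc hgap h
    exact div_pos_of_neg_of_neg (by linarith) (by linarith)

end Gaps

open Finset in
theorem X_orthogonal_on_generic_stratum (n : ℕ) (x : Fin n → ℝ) (c : ℝ) (hc : 0 < c)
    (hgap : ∀ i j : Fin n, (i : ℕ) + 1 = (j : ℕ) → x i - x j > c)
    (ψ lam : Fin n → ℝ)
    (hψ : ∀ i, ψ i = Real.sqrt (c * ∏ j ∈ univ.erase i, (x i - x j + c) / (x i - x j)))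
    (hlam : ∀ i, lam i = Real.sqrt (c * ∏ j ∈ univ.erase i, (x j - x i + c) / (x j - x i)))
    (X : Matrix (Fin n) (Fin n) ℝ)
    (hX : ∀ i j, X i j = lam i * ψ j / (x j - x i + c)) :
    X * X.transpose = 1 := by
  have hx := injective_of_gap hc hgap
  have hy : Function.Injective (x · - c) := fun i j h => hx (sub_left_inj.mp h)
  refine cauchy_mul_transpose_eq_one hx hy (ne_sub_of_gap hc hgap) ?_ ?_ X
    fun i j => by rw [hX, sub_add]
  · intro i
    rw [hlam, Real.mul_self_sqrt, mul_prod_div_eq_neg_eval_nodal_mul_nodalWeight]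
    exact mul_nonneg hc.le <| prod_nonneg fun j hj =>
      (div_pos_of_gap hc hgap (ne_of_mem_erase hj)).le
  · intro j
    rw [hψ, Real.mul_self_sqrt, mul_prod_div_eq_eval_nodal_mul_nodalWeight]
    exact mul_nonneg hc.le <| prod_nonneg fun m hm =>
      (div_pos_of_gap hc hgap (ne_of_mem_erase hm).symm).le
end

section
/- With the setup of the generic CMS stratum ($x_i - x_{i+1} > c$ for all $i$, $|\psi_i|^2 = c\prod_{j\neq i}\frac{x_i-x_j+c}{x_i-x_j}$, $|\lambda_i|^2 = c\prod_{j\neq i}\frac{x_j-x_i+c}{x_j-x_i}$), the matrix $X_{ij} = \frac{|\lambda_i||\psi_j|}{x_j - x_i + c}$ has determinant $1$. -/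
open Finset Matrix Polynomial

lemma eval_basis_prod {n : ℕ} (v : Fin n → ℝ) (t : ℝ) (j : Fin n) :
    Polynomial.eval t (Lagrange.basis univ v j) =
      ∏ k ∈ univ.erase j, (t - v k) / (v j - v k) := by
  rw [Lagrange.basis, Polynomial.eval_prod]
  refine Finset.prod_congr rfl fun k _ => ?_
  simp [Lagrange.basisDivisor, div_eq_inv_mul]

lemma lagrange_sum {n : ℕ} (v : Fin n → ℝ) (hv : Function.Injective v) (t : ℝ) (m : Fin n) :
    ∑ j, (∏ k ∈ univ.erase j, (t - v k) / (v j - v k)) * (v j) ^ (m : ℕ) = t ^ (m : ℕ) := by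
  have hdeg : ((X : ℝ[X]) ^ (m : ℕ)).degree < (univ : Finset (Fin n)).card := by
    rw [Polynomial.degree_X_pow, Finset.card_univ, Fintype.card_fin]
    exact_mod_cast m.isLt
  have h := Lagrange.eq_interpolate (f := (X : ℝ[X]) ^ (m : ℕ)) hv.injOn hdeg
  have h2 := congrArg (Polynomial.eval t) h
  rw [Lagrange.interpolate_apply, Polynomial.eval_finset_sum] at h2
  simp only [Polynomial.eval_mul, Polynomial.eval_C, Polynomial.eval_pow, Polynomial.eval_X,
    eval_basis_prod] at h2
  rw [h2]
  exact Finset.sum_congr rfl fun j _ => mul_comm _ _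

lemma prod_erase_eq_prod_Ioi {n : ℕ} (g : Fin n → Fin n → ℝ) :
    ∏ i, ∏ j ∈ univ.erase i, g i j = ∏ i, ∏ j ∈ Finset.Ioi i, (g i j * g j i) := by
  have h1 : ∀ i : Fin n, (univ.erase i) = Finset.Ioi i ∪ Finset.Iio i := by
    intro i; ext j
    simp only [mem_erase, mem_univ, and_true, mem_union, mem_Ioi, mem_Iio]
    omega
  have hdisj : ∀ i : Fin n, Disjoint (Finset.Ioi i) (Finset.Iio i) := by
    intro i
    simp [Finset.disjoint_left, Finset.mem_Ioi, Finset.mem_Iio]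
    omega
  calc ∏ i, ∏ j ∈ univ.erase i, g i j
      = ∏ i, ((∏ j ∈ Finset.Ioi i, g i j) * ∏ j ∈ Finset.Iio i, g i j) := by
        refine Finset.prod_congr rfl fun i _ => ?_
        rw [h1 i, Finset.prod_union (hdisj i)]
    _ = (∏ i, ∏ j ∈ Finset.Ioi i, g i j) * ∏ i, ∏ j ∈ Finset.Iio i, g i j :=
        Finset.prod_mul_distrib
    _ = (∏ i, ∏ j ∈ Finset.Ioi i, g i j) * ∏ i, ∏ j ∈ Finset.Ioi i, g j i := by
        congr 1
        exact Finset.prod_comm' (fun x y => by simp [Finset.mem_Iio, Finset.mem_Ioi])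
    _ = ∏ i, ∏ j ∈ Finset.Ioi i, g i j * g j i := by
        rw [← Finset.prod_mul_distrib]
        exact Finset.prod_congr rfl fun i _ => Finset.prod_mul_distrib.symm

lemma scalar_helper (q P D : ℝ) (hq : q ≠ 0) (hP : P ≠ 0) (hD : D ≠ 0) :
    (q * P)⁻¹ * (P / D) * D = q⁻¹ := by
  field_simp

theorem det_cauchy {n : ℕ} (a b : Fin n → ℝ) (hb : Function.Injective b)
    (h : ∀ i j, a i + b j ≠ 0) :
    (Matrix.of fun i j => (a i + b j)⁻¹).det =
      (∏ i, ∏ j ∈ Finset.Ioi i, (a j - a i) * (b j - b i)) / (∏ i, ∏ j, (a i + b j)) := by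
  set v : Fin n → ℝ := fun k => -(b k) with hvdef
  have hv : Function.Injective v := fun i j hij => hb (neg_injective hij)
  set C' : Matrix (Fin n) (Fin n) ℝ :=
    Matrix.of fun i j => ∏ k ∈ univ.erase j, (a i - v k) / (v j - v k) with hC'
  have hmul : C' * Matrix.vandermonde v = Matrix.vandermonde a := by
    ext i m
    rw [Matrix.mul_apply]
    simpa [Matrix.vandermonde, hC'] using lagrange_sum v hv (a i) m
  have hdet : C'.det * (Matrix.vandermonde v).det = (Matrix.vandermonde a).det := by
    rw [← Matrix.det_mul, hmul]
  have hvne : (Matrix.vandermonde v).det ≠ 0 :=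
    (Matrix.det_vandermonde_ne_zero_iff).mpr hv
  have hvjk : ∀ j : Fin n, ∀ k ∈ univ.erase j, v j - v k ≠ 0 := by
    intro j k hk
    exact sub_ne_zero.mpr fun e => (Finset.mem_erase.mp hk).1 (hv e).symm
  have hDn : ∀ j : Fin n, (∏ k ∈ univ.erase j, (v j - v k)) ≠ 0 := fun j =>
    Finset.prod_ne_zero_iff.mpr (hvjk j)
  have hPne : ∀ i j : Fin n, (∏ k ∈ univ.erase j, (a i + b k)) ≠ 0 := fun i j =>
    Finset.prod_ne_zero_iff.mpr (fun k _ => h i k)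
  have hfact : (Matrix.of fun i j => (a i + b j)⁻¹) =
      Matrix.diagonal (fun i => (∏ k, (a i + b k))⁻¹) * C' *
        Matrix.diagonal (fun j => ∏ k ∈ univ.erase j, (v j - v k)) := by
    ext i j
    rw [Matrix.mul_diagonal, Matrix.diagonal_mul]
    show (a i + b j)⁻¹ =
      (∏ k, (a i + b k))⁻¹ * (∏ k ∈ univ.erase j, (a i - v k) / (v j - v k)) *
        ∏ k ∈ univ.erase j, (v j - v k)
    have h1 : ∀ k, a i - v k = a i + b k := by intro k; simp [hvdef]
    rw [Finset.prod_div_distrib, Finset.prod_congr rfl (fun k _ => h1 k),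
      ← Finset.mul_prod_erase univ (fun k => a i + b k) (Finset.mem_univ j),
      scalar_helper _ _ _ (h i j) (hPne i j) (hDn j)]
  rw [hfact, Matrix.det_mul, Matrix.det_mul, Matrix.det_diagonal, Matrix.det_diagonal]
  have hC'det : C'.det = (Matrix.vandermonde a).det / (Matrix.vandermonde v).det := by
    field_simp
    linarith [hdet]
  rw [hC'det, Matrix.det_vandermonde, Matrix.det_vandermonde]
  have hpair : ∏ j, ∏ k ∈ univ.erase j, (v j - v k) =
      ∏ i, ∏ j ∈ Finset.Ioi i, ((v i - v j) * (v j - v i)) :=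
    prod_erase_eq_prod_Ioi (fun j k => v j - v k)
  rw [hpair]
  have hsplit : ∏ i, ∏ j ∈ Finset.Ioi i, ((v i - v j) * (v j - v i)) =
      (∏ i, ∏ j ∈ Finset.Ioi i, (b j - b i)) * (∏ i, ∏ j ∈ Finset.Ioi i, (v j - v i)) := by
    rw [← Finset.prod_mul_distrib]
    refine Finset.prod_congr rfl fun i _ => ?_
    rw [← Finset.prod_mul_distrib]
    refine Finset.prod_congr rfl fun j _ => ?_
    simp only [hvdef]; ring
  have hrhs : ∏ i, ∏ j ∈ Finset.Ioi i, (a j - a i) * (b j - b i) =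
      (∏ i, ∏ j ∈ Finset.Ioi i, (a j - a i)) * (∏ i, ∏ j ∈ Finset.Ioi i, (b j - b i)) := by
    rw [← Finset.prod_mul_distrib]
    exact Finset.prod_congr rfl fun i _ => Finset.prod_mul_distrib
  have hQ : ∏ i : Fin n, (∏ k, (a i + b k))⁻¹ = (∏ i : Fin n, ∏ k, (a i + b k))⁻¹ := by
    rw [← Finset.prod_inv_distrib]
  have hVvne : (∏ i, ∏ j ∈ Finset.Ioi i, (v j - v i)) ≠ 0 := by
    rwa [Matrix.det_vandermonde] at hvne
  have hQne : (∏ i : Fin n, ∏ k, (a i + b k)) ≠ 0 :=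
    Finset.prod_ne_zero_iff.mpr fun i _ => Finset.prod_ne_zero_iff.mpr fun k _ => h i k
  rw [hsplit, hrhs, hQ]
  field_simp

open Finset in
theorem X_det_one_on_generic_stratum (n : ℕ) (x : Fin n → ℝ) (c : ℝ) (hc : 0 < c)
    (hgap : ∀ i j : Fin n, (i : ℕ) + 1 = (j : ℕ) → x i - x j > c)
    (ψ lam : Fin n → ℝ)
    (hψ : ∀ i, ψ i = Real.sqrt (c * ∏ j ∈ univ.erase i, (x i - x j + c) / (x i - x j)))
    (hlam : ∀ i, lam i = Real.sqrt (c * ∏ j ∈ univ.erase i, (x j - x i + c) / (x j - x i)))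
    (X : Matrix (Fin n) (Fin n) ℝ)
    (hX : ∀ i j, X i j = lam i * ψ j / (x j - x i + c)) :
    X.det = 1 := by
  -- Step 1: gap bound for all i < j
  have hx : ∀ i j : Fin n, i < j → x i - x j > c := by
    have key : ∀ m : ℕ, ∀ i j : Fin n, (j : ℕ) = (i : ℕ) + m + 1 → x i - x j > c := by
      intro m
      induction m with
      | zero => intro i j hj; exact hgap i j (by omega)
      | succ m ih =>
        intro i j hj
        have hi1 : (i : ℕ) + 1 < n := by have := j.isLt; omega
        have h1 : x i - x ⟨(i : ℕ) + 1, hi1⟩ > c := hgap i ⟨(i : ℕ) + 1, hi1⟩ rfl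
        have h2 : x ⟨(i : ℕ) + 1, hi1⟩ - x j > c := ih ⟨(i : ℕ) + 1, hi1⟩ j (by simp; omega)
        linarith
    intro i j hij
    have hij' : (i : ℕ) < (j : ℕ) := hij
    exact key ((j : ℕ) - (i : ℕ) - 1) i j (by omega)
  -- basic nonvanishing facts
  have hsq : ∀ i j : Fin n, i ≠ j → c ^ 2 < (x i - x j) ^ 2 := by
    intro i j hij
    rcases hij.lt_or_gt with hlt | hlt
    · have := hx i j hlt; nlinarith
    · have := hx j i hlt; nlinarith
  have hdne : ∀ i j : Fin n, i ≠ j → x i - x j ≠ 0 := by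
    intro i j hij h0
    have := hsq i j hij
    rw [h0] at this
    nlinarith
  have hnz : ∀ i j : Fin n, x j - x i + c ≠ 0 := by
    intro i j
    rcases eq_or_ne i j with rfl | hij
    · simpa using hc.ne'
    · rcases hij.lt_or_gt with hlt | hlt
      · have := hx i j hlt; intro h0; linarith
      · have := hx j i hlt; intro h0; linarith
  -- positivity of the square-root arguments
  have hquot : ∀ i j : Fin n, i ≠ j → 0 < (x j - x i + c) / (x j - x i) := by
    intro i j hij
    rcases hij.lt_or_gt with hlt | hlt
    · have := hx i j hlt
      apply div_pos_of_neg_of_neg <;> linarith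
    · have := hx j i hlt
      apply div_pos <;> linarith
  have hA : ∀ i, 0 < c * ∏ j ∈ univ.erase i, (x j - x i + c) / (x j - x i) := by
    intro i
    exact mul_pos hc (Finset.prod_pos fun j hj => hquot i j (Finset.mem_erase.mp hj).1.symm)
  have hB : ∀ i, 0 < c * ∏ j ∈ univ.erase i, (x i - x j + c) / (x i - x j) := by
    intro i
    refine mul_pos hc (Finset.prod_pos fun j hj => ?_)
    have := hquot j i (Finset.mem_erase.mp hj).1
    exact this
  -- define the per-pair quantity t
  set t : Fin n → Fin n → ℝ := fun i j => ((x i - x j) ^ 2 - c ^ 2) / (x i - x j) ^ 2 with ht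
  have htpos : ∀ i j : Fin n, i ≠ j → 0 < t i j := by
    intro i j hij
    have h1 := hsq i j hij
    have h2 := hdne i j hij
    apply div_pos (by linarith) (by positivity)
  have htsymm : ∀ i j : Fin n, t i j = t j i := by
    intro i j
    simp only [ht]
    have : (x i - x j) ^ 2 = (x j - x i) ^ 2 := by ring
    rw [this]
  -- L = ∏ lam i * ψ i equals c^n * ∏∏ t
  have hLR : ∏ i, (lam i * ψ i) = c ^ n * ∏ i, ∏ j ∈ Finset.Ioi i, t i j := by
    have hL0 : 0 ≤ ∏ i, (lam i * ψ i) :=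
      Finset.prod_nonneg fun i _ => by
        rw [hlam, hψ]; exact mul_nonneg (Real.sqrt_nonneg _) (Real.sqrt_nonneg _)
    have hR0 : 0 ≤ c ^ n * ∏ i, ∏ j ∈ Finset.Ioi i, t i j := by
      apply mul_nonneg (by positivity)
      exact Finset.prod_nonneg fun i _ => Finset.prod_nonneg fun j hj =>
        (htpos i j (Finset.mem_Ioi.mp hj).ne).le
    have hABt : ∀ i j : Fin n, i ≠ j →
        ((x j - x i + c) / (x j - x i)) * ((x i - x j + c) / (x i - x j)) = t i j := by
      intro i j hij
      have hd := hdne i j hij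
      have hd' : x j - x i ≠ 0 := fun h0 => hd (by linarith)
      simp only [ht]
      field_simp
      ring
    have hsqL : (∏ i, (lam i * ψ i)) ^ 2 = (c ^ n * ∏ i, ∏ j ∈ Finset.Ioi i, t i j) ^ 2 := by
      have e1 : (∏ i, (lam i * ψ i)) ^ 2 = ∏ i, (lam i ^ 2 * ψ i ^ 2) := by
        rw [← Finset.prod_pow]
        exact Finset.prod_congr rfl fun i _ => by ring
      rw [e1]
      have e2 : ∀ i : Fin n, lam i ^ 2 * ψ i ^ 2 = c ^ 2 * ∏ j ∈ univ.erase i, t i j := by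
        intro i
        rw [hlam, hψ, Real.sq_sqrt (hA i).le, Real.sq_sqrt (hB i).le]
        have : (c * ∏ j ∈ univ.erase i, (x j - x i + c) / (x j - x i)) *
            (c * ∏ j ∈ univ.erase i, (x i - x j + c) / (x i - x j)) =
            c ^ 2 * ∏ j ∈ univ.erase i, (((x j - x i + c) / (x j - x i)) *
              ((x i - x j + c) / (x i - x j))) := by
          rw [Finset.prod_mul_distrib]; ring
        rw [this]
        congr 1
        exact Finset.prod_congr rfl fun j hj =>
          hABt i j (Finset.mem_erase.mp hj).1.symm
      rw [Finset.prod_congr rfl fun i _ => e2 i, Finset.prod_mul_distrib,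
        Finset.prod_const, Finset.card_univ, Fintype.card_fin,
        prod_erase_eq_prod_Ioi t]
      have e3 : ∀ i : Fin n, ∀ j ∈ Finset.Ioi i, t i j * t j i = t i j ^ 2 := by
        intro i j _; rw [← htsymm i j]; ring
      rw [Finset.prod_congr rfl fun i _ => Finset.prod_congr rfl (e3 i)]
      simp_rw [Finset.prod_pow]
      ring
    calc ∏ i, (lam i * ψ i) = Real.sqrt ((∏ i, (lam i * ψ i)) ^ 2) :=
          (Real.sqrt_sq hL0).symm
      _ = Real.sqrt ((c ^ n * ∏ i, ∏ j ∈ Finset.Ioi i, t i j) ^ 2) := by rw [hsqL]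
      _ = c ^ n * ∏ i, ∏ j ∈ Finset.Ioi i, t i j := Real.sqrt_sq hR0
  -- Matrix factorization
  set Cm : Matrix (Fin n) (Fin n) ℝ := Matrix.of fun i j => ((c - x i) + x j)⁻¹ with hCm
  have hXfact : X = Matrix.diagonal lam * Cm * Matrix.diagonal ψ := by
    ext i j
    rw [Matrix.mul_diagonal, Matrix.diagonal_mul, hX]
    show lam i * ψ j / (x j - x i + c) = lam i * Cm i j * ψ j
    have : ((c - x i) + x j) = x j - x i + c := by ring
    simp only [hCm, Matrix.of_apply, this]
    rw [div_eq_mul_inv]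
    ring
  have hbinj : Function.Injective x := by
    intro i j e
    by_contra hne
    exact hdne i j hne (by rw [e]; ring)
  have h' : ∀ i j : Fin n, (c - x i) + x j ≠ 0 := by
    intro i j h0
    exact hnz i j (by linarith)
  have hCmdet : Cm.det =
      (∏ i, ∏ j ∈ Finset.Ioi i, ((c - x j) - (c - x i)) * (x j - x i)) /
        (∏ i, ∏ j, ((c - x i) + x j)) :=
    det_cauchy (fun i => c - x i) x hbinj h'
  -- denominator rewrite
  have hQ : (∏ i, ∏ j, ((c - x i) + x j)) =
      c ^ n * ∏ i, ∏ j ∈ Finset.Ioi i, ((x j - x i + c) * (x i - x j + c)) := by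
    have e1 : ∀ i : Fin n, ∏ j, ((c - x i) + x j) =
        c * ∏ j ∈ univ.erase i, (x j - x i + c) := by
      intro i
      rw [← Finset.mul_prod_erase univ (fun j => (c - x i) + x j) (Finset.mem_univ i)]
      congr 1
      · ring
      · exact Finset.prod_congr rfl fun j _ => by ring
    rw [Finset.prod_congr rfl fun i _ => e1 i, Finset.prod_mul_distrib,
      Finset.prod_const, Finset.card_univ, Fintype.card_fin,
      prod_erase_eq_prod_Ioi (fun i j => x j - x i + c)]
  -- combine
  have hcomb : ∀ f g : Fin n → Fin n → ℝ,
      (∏ i, ∏ j ∈ Finset.Ioi i, f i j) * (∏ i, ∏ j ∈ Finset.Ioi i, g i j) =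
        ∏ i, ∏ j ∈ Finset.Ioi i, (f i j * g i j) := by
    intro f g
    rw [← Finset.prod_mul_distrib]
    exact Finset.prod_congr rfl fun i _ => Finset.prod_mul_distrib.symm
  have hTN : (∏ i, ∏ j ∈ Finset.Ioi i, t i j) *
      (∏ i, ∏ j ∈ Finset.Ioi i, ((c - x j) - (c - x i)) * (x j - x i)) =
      ∏ i, ∏ j ∈ Finset.Ioi i, ((x j - x i + c) * (x i - x j + c)) := by
    rw [hcomb]
    refine Finset.prod_congr rfl fun i _ => Finset.prod_congr rfl fun j hj => ?_
    have hij : i ≠ j := (Finset.mem_Ioi.mp hj).ne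
    have hd := hdne i j hij
    simp only [ht]
    field_simp
    ring
  have hPne : (∏ i, ∏ j ∈ Finset.Ioi i, ((x j - x i + c) * (x i - x j + c))) ≠ 0 :=
    Finset.prod_ne_zero_iff.mpr fun i _ => Finset.prod_ne_zero_iff.mpr fun j _ =>
      mul_ne_zero (hnz i j) (hnz j i)
  have hcn : (c : ℝ) ^ n ≠ 0 := by positivity
  rw [hXfact, Matrix.det_mul, Matrix.det_mul, Matrix.det_diagonal, Matrix.det_diagonal,
    hCmdet, hQ]
  have hL : (∏ i, lam i) * (∏ i, ψ i) = ∏ i, (lam i * ψ i) := Finset.prod_mul_distrib.symm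
  calc (∏ i, lam i) *
        ((∏ i, ∏ j ∈ Finset.Ioi i, ((c - x j) - (c - x i)) * (x j - x i)) /
          (c ^ n * ∏ i, ∏ j ∈ Finset.Ioi i, ((x j - x i + c) * (x i - x j + c)))) *
        (∏ i, ψ i)
      = ((∏ i, (lam i * ψ i)) *
          (∏ i, ∏ j ∈ Finset.Ioi i, ((c - x j) - (c - x i)) * (x j - x i))) /
          (c ^ n * ∏ i, ∏ j ∈ Finset.Ioi i, ((x j - x i + c) * (x i - x j + c))) := by
        rw [← hL]; ring
    _ = (c ^ n * ∏ i, ∏ j ∈ Finset.Ioi i, ((x j - x i + c) * (x i - x j + c))) /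
          (c ^ n * ∏ i, ∏ j ∈ Finset.Ioi i, ((x j - x i + c) * (x i - x j + c))) := by
        rw [hLR]
        rw [mul_assoc, hTN]
    _ = 1 := div_self (mul_ne_zero hcn hPne)
end

section
/- Let $n \geq 2$, $2 \leq j \leq n$, and let $g = \alpha P Y$ where $P$ is the signed cyclic shift matrix ($P_{i,i+1} = -1$, $P_{n,1} = 1$), $\alpha = \mathrm{diag}(\beta^{-1}, 1, \dots, 1, \beta, 1, \dots, 1)$ with $\beta$ in position $j$ and $|\beta| = 1$, and $Y$ is the identity except for the $2\times2$ block $Y_{11} = Y_{jj} = r$, $Y_{1j} = q$, $Y_{j1} = -q$ with $r^2 + q^2 = 1$. Then $\det(\lambda I - g) = \lambda^n + (-1)^{j-1} q \beta^{-1} \lambda^{n-j+1} + (-1)^{n-j+1} q \beta \lambda^{j-1} + (-1)^n$. -/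
open Matrix Finset

/-- Upper-bidiagonal matrix with an extra first column. -/
def Fmat (N : ℕ) (d e c : ℕ → ℂ) : Matrix (Fin N) (Fin N) ℂ :=
  Matrix.of fun i k =>
    if (k : ℕ) = 0 then c i
    else if (k : ℕ) = (i : ℕ) + 1 then e i
    else if (k : ℕ) = (i : ℕ) then d i else 0

theorem det_Fmat (N : ℕ) (d e c : ℕ → ℂ) :
    (Fmat (N + 1) d e c).det =
      ∑ i ∈ Finset.range (N + 1),
        (-1) ^ i * c i * (∏ k ∈ Finset.range i, e k) *
          (∏ k ∈ Finset.Ico (i + 1) (N + 1), d k) := by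
  induction N with
  | zero =>
      rw [show (Fmat 1 d e c).det = Fmat 1 d e c 0 0 from Matrix.det_fin_one _]
      simp [Fmat]
  | succ N ih =>
      rw [Matrix.det_succ_row (Fmat (N + 2) d e c) (Fin.last (N + 1))]
      set A := Fmat (N + 2) d e c with hA
      set F : Fin (N + 2) → ℂ := fun k =>
        (-1) ^ ((Fin.last (N + 1) : ℕ) + (k : ℕ)) * A (Fin.last (N + 1)) k *
          (A.submatrix (Fin.last (N + 1)).succAbove k.succAbove).det with hF
      have h0l : (0 : Fin (N + 2)) ≠ Fin.last (N + 1) := by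
        intro h
        have := congrArg (fun x : Fin (N + 2) => (x : ℕ)) h
        simp at this
      have hcollapse : ∑ k : Fin (N + 2), F k = F 0 + F (Fin.last (N + 1)) := by
        rw [← Finset.sum_subset (Finset.subset_univ ({0, Fin.last (N + 1)} : Finset (Fin (N + 2))))]
        · rw [Finset.sum_pair h0l]
        · intro k _ hk
          simp only [Finset.mem_insert, Finset.mem_singleton, not_or] at hk
          have h0 : (k : ℕ) ≠ 0 := fun h => hk.1 (Fin.ext h)
          have hl : (k : ℕ) ≠ N + 1 := fun h => hk.2 (Fin.ext h)
          have h2 : (k : ℕ) ≠ N + 2 := by omega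
          have : A (Fin.last (N + 1)) k = 0 := by
            simp [hA, Fmat, h0, hl, h2, hk.1]
          simp [hF, this]
      rw [hcollapse]
      have hminor0 : (A.submatrix (Fin.last (N + 1)).succAbove (0 : Fin (N + 2)).succAbove).det
          = ∏ k ∈ Finset.range (N + 1), e k := by
        rw [Matrix.det_of_lowerTriangular]
        · rw [← Fin.prod_univ_eq_prod_range]
          apply Finset.prod_congr rfl
          intro i _
          simp [hA, Fmat, Fin.succAbove_last, Fin.succAbove_zero, Fin.val_succ,
            Fin.coe_castSucc]
        · intro i k hik
          have h : (i : ℕ) < (k : ℕ) := hik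
          have h1 : ((k : Fin (N + 1)) : ℕ) + 1 ≠ 0 := by omega
          have h2 : (k : ℕ) + 1 ≠ (i : ℕ) + 1 := by omega
          have h3 : (k : ℕ) + 1 ≠ (i : ℕ) := by omega
          simp [hA, Fmat, Fin.succAbove_last, Fin.succAbove_zero, Fin.val_succ,
            Fin.coe_castSucc, h1, h2, h3, show (k : ℕ) ≠ (i : ℕ) by omega]
      have hminorl : (A.submatrix (Fin.last (N + 1)).succAbove
            (Fin.last (N + 1)).succAbove).det = (Fmat (N + 1) d e c).det := by
        congr 1
        ext i k
        simp [hA, Fmat, Fin.succAbove_last, Fin.coe_castSucc]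
      have hFl : F (Fin.last (N + 1)) =
          d (N + 1) * (Fmat (N + 1) d e c).det := by
        have hentry : A (Fin.last (N + 1)) (Fin.last (N + 1)) = d (N + 1) := by
          simp [hA, Fmat, Fin.val_last]
        rw [hF]
        simp only [hentry, hminorl, Fin.val_last]
        rw [show ((-1 : ℂ)) ^ (N + 1 + (N + 1)) = 1 from Even.neg_one_pow ⟨N + 1, by ring⟩]
        ring
      have hF0 : F 0 = (-1) ^ (N + 1) * c (N + 1) * ∏ k ∈ Finset.range (N + 1), e k := by
        have hentry : A (Fin.last (N + 1)) 0 = c (N + 1) := by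
          simp [hA, Fmat, Fin.val_last]
        rw [hF]
        simp only [hminor0, hentry, Fin.val_last, Fin.val_zero, Nat.add_zero]
        try ring
      rw [hF0, hFl, ih]
      conv_rhs => rw [Finset.sum_range_succ]
      have hprod : ∀ i ∈ Finset.range (N + 1),
          (-1 : ℂ) ^ i * c i * (∏ k ∈ Finset.range i, e k) *
            (∏ k ∈ Finset.Ico (i + 1) (N + 2), d k)
          = ((-1) ^ i * c i * (∏ k ∈ Finset.range i, e k) *
            (∏ k ∈ Finset.Ico (i + 1) (N + 1), d k)) * d (N + 1) := by
        intro i hi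
        have hi' := Finset.mem_range.mp hi
        rw [Finset.prod_Ico_succ_top (by omega : i + 1 ≤ N + 1)]
        ring
      rw [Finset.sum_congr rfl hprod, ← Finset.sum_mul]
      rw [show Finset.Ico (N + 1 + 1) (N + 1 + 1) = ∅ from Finset.Ico_self _, Finset.prod_empty]
      ring

/-- `Fmat t d e c`-shaped top-left block, diagonal `f` and subdiagonal `s` below row `t`. -/
def Gmat (N t : ℕ) (d e c f s : ℕ → ℂ) : Matrix (Fin N) (Fin N) ℂ :=
  Matrix.of fun i k =>
    if (i : ℕ) < t then
      (if (k : ℕ) = 0 then c i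
       else if (k : ℕ) = (i : ℕ) + 1 ∧ (k : ℕ) < t then e i
       else if (k : ℕ) = (i : ℕ) then d i else 0)
    else
      (if (k : ℕ) = (i : ℕ) then f i
       else if (k : ℕ) + 1 = (i : ℕ) ∧ t < (i : ℕ) then s i else 0)

theorem det_Gmat (t : ℕ) (ht : 1 ≤ t) (d e c f s : ℕ → ℂ) :
    ∀ N, t ≤ N → (Gmat N t d e c f s).det
      = (Fmat t d e c).det * ∏ i ∈ Finset.Ico t N, f i := by
  refine Nat.le_induction ?_ ?_
  · rw [Finset.Ico_self, Finset.prod_empty, mul_one]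
    congr 1
    ext i k
    have hi : (i : ℕ) < t := i.isLt
    have hk : (k : ℕ) < t := k.isLt
    simp only [Gmat, Fmat, Matrix.of_apply, hi, if_pos, hk, and_true]
  · intro N hN ih
    obtain ⟨M, rfl⟩ : ∃ M, N = M + 1 := ⟨N - 1, by omega⟩
    rw [Matrix.det_succ_column (Gmat (M + 2) t d e c f s) (Fin.last (M + 1))]
    rw [Finset.sum_eq_single (Fin.last (M + 1))]
    · have hentry : Gmat (M + 2) t d e c f s (Fin.last (M + 1)) (Fin.last (M + 1))
          = f (M + 1) := by
        have h1 : ¬ ((M + 1 : ℕ) < t) := by omega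
        simp [Gmat, Fin.val_last, h1]
      have hminor : (Gmat (M + 2) t d e c f s).submatrix
            (Fin.last (M + 1)).succAbove (Fin.last (M + 1)).succAbove
          = Gmat (M + 1) t d e c f s := by
        ext i k
        simp only [Matrix.submatrix_apply, Fin.succAbove_last, Gmat, Matrix.of_apply,
          Fin.coe_castSucc]
      rw [hentry, hminor, ih, Finset.prod_Ico_succ_top (by omega : t ≤ M + 1)]
      rw [show ((-1 : ℂ)) ^ ((Fin.last (M + 1) : ℕ) + (Fin.last (M + 1) : ℕ)) = 1 by
        simp only [Fin.val_last]; exact Even.neg_one_pow ⟨M + 1, by ring⟩]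
      ring
    · intro i _ hi
      have hiv : (i : ℕ) < M + 1 := by
        rcases Fin.lt_or_lt_of_ne hi with h | h
        · simpa [Fin.lt_iff_val_lt_val, Fin.val_last] using h
        · exact absurd (by simpa [Fin.lt_iff_val_lt_val, Fin.val_last] using h) (by omega)
      have : Gmat (M + 2) t d e c f s i (Fin.last (M + 1)) = 0 := by
        have h0 : (M + 1 : ℕ) ≠ 0 := by omega
        by_cases hit : (i : ℕ) < t
        · have h1 : ¬ ((M + 1 : ℕ) < t) := by omega
          have h2 : (M + 1 : ℕ) ≠ (i : ℕ) := by omega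
          simp [Gmat, Fin.val_last, hit, h0, h1, h2]
        · have h2 : (M + 1 : ℕ) ≠ (i : ℕ) := by omega
          have h3 : ¬ ((M + 1 : ℕ) + 1 = (i : ℕ)) := by omega
          simp [Gmat, Fin.val_last, hit, h2, h3]
      simp [this]
    · intro h
      exact absurd (Finset.mem_univ _) h

noncomputable def adf (j : ℕ) (β : ℂ) (i : ℕ) : ℂ :=
  if i = 0 then β⁻¹ else if i = j - 1 then β else 1

def Yef (j : ℕ) (r q : ℝ) (a b : ℕ) : ℂ :=
  if a = b then (if a = 0 ∨ a = j - 1 then (r : ℂ) else 1)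
  else if a = 0 ∧ b = j - 1 then (q : ℂ)
  else if a = j - 1 ∧ b = 0 then -(q : ℂ) else 0

theorem M_entry (m j : ℕ) (r q : ℝ) (β lam : ℂ)
    (P Y : Matrix (Fin (m + 1)) (Fin (m + 1)) ℂ)
    (hP : ∀ i k : Fin (m + 1), P i k = if (i : ℕ) + 1 = (k : ℕ) then -1
      else if (i : ℕ) = m ∧ (k : ℕ) = 0 then 1 else 0)
    (hY : ∀ a b : Fin (m + 1), Y a b = Yef j r q a b)
    (i k : Fin (m + 1)) :
    (lam • (1 : Matrix (Fin (m + 1)) (Fin (m + 1)) ℂ)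
        - Matrix.diagonal (fun i : Fin (m + 1) => adf j β (i : ℕ)) * P * Y) i k =
      (if (k : ℕ) = (i : ℕ) then lam else 0) +
      (if (i : ℕ) < m then adf j β i * Yef j r q ((i : ℕ) + 1) (k : ℕ)
       else -(adf j β (i : ℕ) * Yef j r q 0 (k : ℕ))) := by
  have h1 : (lam • (1 : Matrix (Fin (m + 1)) (Fin (m + 1)) ℂ)) i k
      = if (k : ℕ) = (i : ℕ) then lam else 0 := by
    rw [Matrix.smul_apply, Matrix.one_apply]
    by_cases h : i = k
    · simp [h]
    · have : (k : ℕ) ≠ (i : ℕ) := fun hh => h (Fin.ext hh.symm)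
      simp [h, this]
  have h2 : (Matrix.diagonal (fun i : Fin (m + 1) => adf j β (i : ℕ)) * P * Y) i k
      = if (i : ℕ) < m then -(adf j β i * Yef j r q ((i : ℕ) + 1) (k : ℕ))
        else adf j β (i : ℕ) * Yef j r q 0 (k : ℕ) := by
    rw [Matrix.mul_apply]
    by_cases hi : (i : ℕ) < m
    · rw [Finset.sum_eq_single (⟨(i : ℕ) + 1, by omega⟩ : Fin (m + 1))]
      · rw [Matrix.diagonal_mul, hP, hY]
        have : (i : ℕ) + 1 = ((⟨(i : ℕ) + 1, by omega⟩ : Fin (m + 1)) : ℕ) := rfl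
        rw [if_pos this]
        simp [hi, mul_comm]
        try ring
      · intro b _ hb
        have hb1 : (i : ℕ) + 1 ≠ (b : ℕ) := by
          intro hh
          exact hb (Fin.ext hh.symm)
        have hb2 : ¬ ((i : ℕ) = m ∧ (b : ℕ) = 0) := by
          rintro ⟨h3, _⟩; omega
        rw [Matrix.diagonal_mul, hP, if_neg hb1, if_neg hb2]
        ring
      · intro h; exact absurd (Finset.mem_univ _) h
    · have him : (i : ℕ) = m := by have := i.isLt; omega
      rw [Finset.sum_eq_single (0 : Fin (m + 1))]
      · rw [Matrix.diagonal_mul, hP, hY]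
        have hb1 : ¬ ((i : ℕ) + 1 = ((0 : Fin (m + 1)) : ℕ)) := by simp
        rw [if_neg hb1, if_pos ⟨him, rfl⟩]
        simp [hi, mul_one]
      · intro b _ hb
        have hb1 : (i : ℕ) + 1 ≠ (b : ℕ) := by
          have := b.isLt; omega
        have hb2 : ¬ ((i : ℕ) = m ∧ (b : ℕ) = 0) := by
          rintro ⟨_, h4⟩
          exact hb (Fin.ext h4)
        rw [Matrix.diagonal_mul, hP, if_neg hb1, if_neg hb2]
        ring
      · intro h; exact absurd (Finset.mem_univ _) h
  rw [Matrix.sub_apply, h1, h2]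
  by_cases hi : (i : ℕ) < m <;> simp [hi] <;> ring


theorem Mf_eq_F (j : ℕ) (hj2 : 2 ≤ j) (lam β : ℂ) (r q : ℝ) (i k : ℕ) :
    (if k = i then lam else 0) + adf j β i * Yef j r q (i + 1) k =
      (if k = 0 then
        (if i = 0 then lam else 0) - (if i = j - 2 then adf j β (j - 2) * (q : ℂ) else 0)
       else if k = i + 1 then adf j β i * (if i = j - 2 then (r : ℂ) else 1)
       else if k = i then lam else 0) := by
  have hdelta : (if (0 : ℕ) = i then lam else 0) = (if i = 0 then lam else 0) := by
    rcases eq_or_ne i 0 with h | h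
    · simp [h]
    · simp [h, Ne.symm h]
  by_cases h0 : k = 0
  · subst h0
    rw [if_pos rfl, hdelta]
    by_cases h3 : i = j - 2
    · have hYv : Yef j r q (i + 1) 0 = -(q : ℂ) := by
        have d1 : i + 1 ≠ 0 := by omega
        have e1 : i + 1 = j - 1 := by omega
        have e5 : j - 1 ≠ 0 := by omega
        simp [Yef, d1, e1, e5]
      rw [hYv, if_pos h3, h3]
      ring
    · have hYv : Yef j r q (i + 1) 0 = 0 := by
        have d1 : i + 1 ≠ 0 := by omega
        have e1 : i + 1 ≠ j - 1 := by omega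
        simp [Yef, d1, e1]
      rw [hYv, if_neg h3]
      ring
  · rw [if_neg h0]
    by_cases h1 : k = i + 1
    · subst h1
      rw [if_pos rfl, if_neg (by omega : i + 1 ≠ i)]
      have hYv : Yef j r q (i + 1) (i + 1) = (if i = j - 2 then (r : ℂ) else 1) := by
        by_cases h3 : i = j - 2
        · have e1 : i + 1 = j - 1 := by omega
          have e5 : j - 1 ≠ 0 := by omega
          have e6 : j - 2 + 1 = j - 1 := by omega
          simp [Yef, h3, e1, e5, e6]
        · have e1 : i + 1 ≠ j - 1 := by omega
          simp [Yef, h3, e1]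
      rw [hYv]
      ring
    · rw [if_neg h1]
      by_cases h2 : k = i
      · subst h2
        rw [if_pos rfl]
        have hYv : Yef j r q (k + 1) k = 0 := by
          have d1 : k + 1 ≠ k := by omega
          simp [Yef, d1, h0]
        rw [hYv]
        ring
      · rw [if_neg h2]
        have hYv : Yef j r q (i + 1) k = 0 := by
          have d1 : i + 1 ≠ k := by omega
          simp [Yef, d1, h0]
        rw [hYv]
        ring

theorem Mf_eq_G (j : ℕ) (hj2 : 2 ≤ j) (lam β : ℂ) (r q : ℝ) (i k : ℕ) :
    (if (if k < j - 1 then k else k + 1) = i then lam else 0)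
      + adf j β i * Yef j r q (i + 1) (if k < j - 1 then k else k + 1) =
    (if i < j - 1 then
       (if k = 0 then
          (if i = 0 then lam else 0) - (if i = j - 2 then adf j β (j - 2) * (q : ℂ) else 0)
        else if k = i + 1 ∧ k < j - 1 then adf j β i * (if i = j - 2 then (r : ℂ) else 1)
        else if k = i then lam else 0)
     else (if k = i then adf j β i * (if i = j - 2 then (r : ℂ) else 1)
        else if k + 1 = i ∧ j - 1 < i then lam else 0)) := by
  by_cases hi : i < j - 1
  · rw [if_pos hi]
    by_cases hk : k < j - 1
    · rw [if_pos hk]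
      simp only [hk, and_true]
      exact Mf_eq_F j hj2 lam β r q i k
    · rw [if_neg hk]
      have c1 : k + 1 ≠ i := by omega
      have c0 : ¬ (k = 0) := by omega
      have c2 : ¬ (k = i + 1 ∧ k < j - 1) := by omega
      have c3 : k ≠ i := by omega
      rw [if_neg c1, if_neg c0, if_neg c2, if_neg c3]
      have hYv : Yef j r q (i + 1) (k + 1) = 0 := by
        have d1 : i + 1 ≠ k + 1 := by omega
        simp [Yef, d1, show i ≠ k by omega]
      rw [hYv]
      ring
  · rw [if_neg hi]
    by_cases hk : k < j - 1
    · rw [if_pos hk]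
      have c3 : k ≠ i := by omega
      have c4 : ¬ (k + 1 = i ∧ j - 1 < i) := by omega
      rw [if_neg c3, if_neg c3, if_neg c4]
      have hYv : Yef j r q (i + 1) k = 0 := by
        have d1 : i + 1 ≠ k := by omega
        have d3 : i + 1 ≠ j - 1 := by omega
        simp [Yef, d1, d3]
      rw [hYv]
      ring
    · rw [if_neg hk]
      by_cases h2 : k = i
      · subst h2
        rw [if_pos rfl, if_neg (by omega : k + 1 ≠ k)]
        have e2 : k ≠ j - 2 := by omega
        have hYv : Yef j r q (k + 1) (k + 1) = 1 := by
          have e4 : k + 1 ≠ j - 1 := by omega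
          simp [Yef, e4]
        rw [hYv, if_neg e2]
        ring
      · rw [if_neg h2]
        by_cases h3 : k + 1 = i ∧ j - 1 < i
        · rw [if_pos h3, if_pos h3.1]
          have hYv : Yef j r q (i + 1) (k + 1) = 0 := by
            have d1 : i + 1 ≠ k + 1 := by omega
            simp [Yef, d1, show i ≠ k by omega]
          rw [hYv]
          ring
        · rw [if_neg h3]
          have c1 : k + 1 ≠ i := by omega
          rw [if_neg c1]
          have hYv : Yef j r q (i + 1) (k + 1) = 0 := by
            have d1 : i + 1 ≠ k + 1 := by omega
            simp [Yef, d1, show i ≠ k by omega]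
          rw [hYv]
          ring

open Matrix Finset in
theorem charpoly_one_dim_stratum (n j : ℕ) (hn : 2 ≤ n) (hj2 : 2 ≤ j) (hjn : j ≤ n)
    (r q : ℝ) (hrq : r ^ 2 + q ^ 2 = 1) (β : ℂ) (hβ : ‖β‖ = 1)
    (P : Matrix (Fin n) (Fin n) ℂ)
    (hP : ∀ i k : Fin n, P i k =
      if (i : ℕ) + 1 = (k : ℕ) then -1
      else if (i : ℕ) = n - 1 ∧ (k : ℕ) = 0 then 1 else 0)
    (α : Matrix (Fin n) (Fin n) ℂ)
    (hα : α = Matrix.diagonal (fun i : Fin n =>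
      if (i : ℕ) = 0 then β⁻¹ else if (i : ℕ) = j - 1 then β else 1))
    (Y : Matrix (Fin n) (Fin n) ℂ)
    (hY : ∀ i k : Fin n, Y i k =
      if i = k then (if (i : ℕ) = 0 ∨ (i : ℕ) = j - 1 then (r : ℂ) else 1)
      else if (i : ℕ) = 0 ∧ (k : ℕ) = j - 1 then (q : ℂ)
      else if (i : ℕ) = j - 1 ∧ (k : ℕ) = 0 then -(q : ℂ) else 0) :
    ∀ lam : ℂ,
      (lam • (1 : Matrix (Fin n) (Fin n) ℂ) - α * P * Y).det
        = lam ^ n + (-1) ^ (j - 1) * q * β⁻¹ * lam ^ (n - j + 1)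
          + (-1) ^ (n - j + 1) * q * β * lam ^ (j - 1) + (-1) ^ n := by
  intro lam
  obtain ⟨m, rfl⟩ : ∃ m, n = m + 1 := ⟨n - 1, by omega⟩
  have hm : 1 ≤ m := by omega
  have hjm : j - 1 ≤ m := by omega
  have hβ0 : β ≠ 0 := by
    intro h; rw [h] at hβ; simp at hβ
  have hββ : β * β⁻¹ = 1 := mul_inv_cancel₀ hβ0
  have hrq' : (r : ℂ) ^ 2 + (q : ℂ) ^ 2 = 1 := by exact_mod_cast hrq
  have hYf : ∀ a b : Fin (m + 1), Y a b = Yef j r q a b := by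
    intro a b
    rw [hY]
    by_cases h : a = b
    · subst h; simp [Yef]
    · have h' : (a : ℕ) ≠ (b : ℕ) := fun hh => h (Fin.ext hh)
      simp [Yef, h, h']
  have hP' : ∀ i k : Fin (m + 1), P i k = if (i : ℕ) + 1 = (k : ℕ) then -1
      else if (i : ℕ) = m ∧ (k : ℕ) = 0 then 1 else 0 := by
    intro i k; rw [hP]; norm_num
  have hαf : α = Matrix.diagonal (fun i : Fin (m + 1) => adf j β (i : ℕ)) := by
    rw [hα]; rfl
  set M := lam • (1 : Matrix (Fin (m + 1)) (Fin (m + 1)) ℂ) - α * P * Y with hMdef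
  have hME : ∀ i k : Fin (m + 1), M i k =
      (if (k : ℕ) = (i : ℕ) then lam else 0) +
      (if (i : ℕ) < m then adf j β i * Yef j r q ((i : ℕ) + 1) (k : ℕ)
       else -(adf j β (i : ℕ) * Yef j r q 0 (k : ℕ))) := by
    intro i k
    rw [hMdef, hαf]
    exact M_entry m j r q β lam P Y hP' hYf i k
  set dd : ℕ → ℂ := fun _ => lam with hdd
  set ee : ℕ → ℂ := fun i => adf j β i * (if i = j - 2 then (r : ℂ) else 1) with hee
  set cc : ℕ → ℂ := fun i =>
    (if i = 0 then lam else 0) - (if i = j - 2 then adf j β (j - 2) * (q : ℂ) else 0) with hcc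
  have hjf : j - 1 < m + 1 := by omega
  have hminor_last : M.submatrix (Fin.last m).succAbove (Fin.last m).succAbove
      = Fmat m dd ee cc := by
    ext i k
    have hi : (i : ℕ) < m := i.isLt
    simp only [Matrix.submatrix_apply, Fin.succAbove_last]
    rw [hME]
    simp only [Fin.coe_castSucc]
    rw [if_pos hi]
    simp only [Fmat, Matrix.of_apply, Fin.coe_castSucc, hdd, hee, hcc]
    exact Mf_eq_F j hj2 lam β r q (i : ℕ) (k : ℕ)
  have hminor_zero : (M.submatrix (Fin.last m).succAbove (0 : Fin (m + 1)).succAbove).det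
      = ∏ i ∈ Finset.range m, ee i := by
    rw [Matrix.det_of_lowerTriangular]
    · rw [← Fin.prod_univ_eq_prod_range]
      apply Finset.prod_congr rfl
      intro i _
      have hi : (i : ℕ) < m := i.isLt
      simp only [Matrix.submatrix_apply, Fin.succAbove_last, Fin.succAbove_zero]
      rw [hME]
      simp only [Fin.coe_castSucc, Fin.val_succ]
      rw [if_pos hi, if_neg (by omega : (i : ℕ) + 1 ≠ (i : ℕ))]
      have h2 : Yef j r q ((i : ℕ) + 1) ((i : ℕ) + 1)
          = (if (i : ℕ) = j - 2 then (r : ℂ) else 1) := by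
        by_cases h3 : (i : ℕ) = j - 2
        · have e1 : (i : ℕ) + 1 = j - 1 := by omega
          have e5 : j - 1 ≠ 0 := by omega
          have e6 : j - 2 + 1 = j - 1 := by omega
          simp [Yef, h3, e1, e5, e6]
        · have e1 : (i : ℕ) + 1 ≠ j - 1 := by omega
          simp [Yef, h3, e1]
      rw [h2]
      simp [hee]
    · intro a b hab
      have h : (a : ℕ) < (b : ℕ) := hab
      simp only [Matrix.submatrix_apply, Fin.succAbove_last, Fin.succAbove_zero]
      rw [hME]
      simp only [Fin.coe_castSucc, Fin.val_succ]
      rw [if_pos a.isLt, if_neg (by omega : (b : ℕ) + 1 ≠ (a : ℕ))]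
      have h2 : Yef j r q ((a : ℕ) + 1) ((b : ℕ) + 1) = 0 := by
        have d1 : (a : ℕ) + 1 ≠ (b : ℕ) + 1 := by omega
        simp [Yef, d1, show (a : ℕ) ≠ (b : ℕ) by omega]
      rw [h2]
      ring
  have hcol : ∀ kk : Fin m, (((⟨j - 1, hjf⟩ : Fin (m + 1)).succAbove kk) : ℕ)
      = if (kk : ℕ) < j - 1 then (kk : ℕ) else (kk : ℕ) + 1 := by
    intro kk
    by_cases h : (kk : ℕ) < j - 1
    · rw [Fin.succAbove_of_castSucc_lt _ _ (by
        rw [Fin.lt_def]; simpa using h), Fin.coe_castSucc, if_pos h]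
    · rw [Fin.succAbove_of_le_castSucc _ _ (by
        rw [Fin.le_def]; simpa using (by omega : j - 1 ≤ (kk : ℕ))), Fin.val_succ, if_neg h]
  have hminor_j : M.submatrix (Fin.last m).succAbove (⟨j - 1, hjf⟩ : Fin (m + 1)).succAbove
      = Gmat m (j - 1) dd ee cc ee dd := by
    ext i k
    have hi : (i : ℕ) < m := i.isLt
    simp only [Matrix.submatrix_apply, Fin.succAbove_last]
    rw [hME]
    simp only [Fin.coe_castSucc, hcol k]
    rw [if_pos hi]
    simp only [Gmat, Matrix.of_apply, Fin.coe_castSucc, hdd, hee, hcc]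
    exact Mf_eq_G j hj2 lam β r q (i : ℕ) (k : ℕ)
  have hFsum : ∀ K, j - 1 ≤ K →
      ∑ i ∈ Finset.range K, (-1) ^ i * cc i * (∏ k ∈ Finset.range i, ee k) *
        (∏ k ∈ Finset.Ico (i + 1) K, dd k)
      = lam ^ K - (-1) ^ (j - 2) * q * β⁻¹ * lam ^ (K - (j - 1)) := by
    intro K hK
    have hsplit : ∀ i ∈ Finset.range K,
        (-1 : ℂ) ^ i * cc i * (∏ k ∈ Finset.range i, ee k) * (∏ k ∈ Finset.Ico (i + 1) K, dd k)
        = (-1 : ℂ) ^ i * (if i = 0 then lam else 0) * (∏ k ∈ Finset.range i, ee k) *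
            (∏ k ∈ Finset.Ico (i + 1) K, dd k)
          - (-1 : ℂ) ^ i * (if i = j - 2 then adf j β (j - 2) * (q : ℂ) else 0) *
            (∏ k ∈ Finset.range i, ee k) * (∏ k ∈ Finset.Ico (i + 1) K, dd k) := by
      intro i _
      simp only [hcc]
      ring
    rw [Finset.sum_congr rfl hsplit, Finset.sum_sub_distrib]
    have hS1 : ∑ i ∈ Finset.range K,
        (-1 : ℂ) ^ i * (if i = 0 then lam else 0) * (∏ k ∈ Finset.range i, ee k) *
          (∏ k ∈ Finset.Ico (i + 1) K, dd k) = lam ^ K := by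
      rw [Finset.sum_eq_single_of_mem 0 (Finset.mem_range.mpr (by omega))]
      · rw [if_pos rfl]
        simp only [hdd, Finset.range_zero, Finset.prod_empty, Finset.prod_const, Nat.card_Ico]
        have hh : lam ^ (K - (0 + 1)) * lam = lam ^ K := by
          rw [← pow_succ]
          congr 1
          omega
        linear_combination hh
      · intro b _ hbne
        simp [hbne]
    have hkey : adf j β (j - 2) * ∏ i ∈ Finset.range (j - 2), ee i = β⁻¹ := by
      by_cases hj2' : j = 2
      · subst hj2'
        simp [adf]
      · have h1 : ∏ i ∈ Finset.range (j - 2), ee i = β⁻¹ := by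
          rw [Finset.prod_eq_single_of_mem 0 (Finset.mem_range.mpr (by omega))]
          · have h2 : (0 : ℕ) ≠ j - 2 := by omega
            simp [hee, adf, h2]
          · intro b hb hbne
            have hb' := Finset.mem_range.mp hb
            have h3 : b ≠ j - 2 := by omega
            have h4 : b ≠ j - 1 := by omega
            simp [hee, adf, hbne, h3, h4]
        have h5 : j - 2 ≠ 0 := by omega
        have h6 : j - 2 ≠ j - 1 := by omega
        rw [h1]
        simp [adf, h5, h6]
    have hS2 : ∑ i ∈ Finset.range K,
        (-1 : ℂ) ^ i * (if i = j - 2 then adf j β (j - 2) * (q : ℂ) else 0) *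
          (∏ k ∈ Finset.range i, ee k) * (∏ k ∈ Finset.Ico (i + 1) K, dd k)
        = (-1) ^ (j - 2) * q * β⁻¹ * lam ^ (K - (j - 1)) := by
      rw [Finset.sum_eq_single_of_mem (j - 2) (Finset.mem_range.mpr (by omega))]
      · rw [if_pos rfl]
        simp only [hdd, Finset.prod_const, Nat.card_Ico]
        rw [show j - 2 + 1 = j - 1 by omega]
        calc (-1 : ℂ) ^ (j - 2) * (adf j β (j - 2) * (q : ℂ)) *
              (∏ k ∈ Finset.range (j - 2), ee k) * lam ^ (K - (j - 1))
            = (-1 : ℂ) ^ (j - 2) * (q : ℂ) *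
              (adf j β (j - 2) * ∏ k ∈ Finset.range (j - 2), ee k) * lam ^ (K - (j - 1)) := by
              ring
          _ = (-1) ^ (j - 2) * q * β⁻¹ * lam ^ (K - (j - 1)) := by rw [hkey]
      · intro b _ hbne
        simp [hbne]
    rw [hS1, hS2]
  have hdetF : ∀ K, j - 1 ≤ K → (Fmat K dd ee cc).det
      = lam ^ K - (-1) ^ (j - 2) * q * β⁻¹ * lam ^ (K - (j - 1)) := by
    intro K hK
    obtain ⟨N, rfl⟩ : ∃ N, K = N + 1 := ⟨K - 1, by omega⟩
    rw [det_Fmat]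
    exact hFsum (N + 1) hK
  have hprod_tail : adf j β m * ∏ i ∈ Finset.Ico (j - 1) m, ee i = β := by
    have h1 : ∀ i ∈ Finset.Ico (j - 1) m, ee i = adf j β i := by
      intro i hi
      have hi' := Finset.mem_Ico.mp hi
      have : i ≠ j - 2 := by omega
      simp [hee, this]
    rw [Finset.prod_congr rfl h1, mul_comm, ← Finset.prod_Ico_succ_top hjm]
    rw [Finset.prod_eq_single_of_mem (j - 1) (Finset.mem_Ico.mpr ⟨le_refl _, by omega⟩)]
    · have h2 : j - 1 ≠ 0 := by omega
      simp [adf, h2]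
    · intro b hb hbne
      have hb' := Finset.mem_Ico.mp hb
      have h3 : b ≠ 0 := by omega
      simp [adf, h3, hbne]
  have hprod_all : adf j β m * ∏ i ∈ Finset.range m, ee i = (r : ℂ) := by
    have h1 : ∏ i ∈ Finset.range m, ee i
        = (∏ i ∈ Finset.range m, adf j β i) * ∏ i ∈ Finset.range m,
            (if i = j - 2 then (r : ℂ) else 1) := by
      rw [← Finset.prod_mul_distrib]
      try exact Finset.prod_congr rfl (fun i _ => by simp [hee])
    have h2 : ∏ i ∈ Finset.range m, (if i = j - 2 then (r : ℂ) else 1) = (r : ℂ) := by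
      rw [Finset.prod_eq_single_of_mem (j - 2) (Finset.mem_range.mpr (by omega))]
      · simp
      · intro b _ hbne
        simp [hbne]
    have h3 : ∏ i ∈ Finset.range (m + 1), adf j β i = 1 := by
      rw [← Finset.prod_erase_mul _ _ (Finset.mem_range.mpr (by omega : j - 1 < m + 1))]
      rw [Finset.prod_eq_single_of_mem 0
          (Finset.mem_erase.mpr ⟨by omega, Finset.mem_range.mpr (by omega)⟩)]
      · have h4 : j - 1 ≠ 0 := by omega
        simp [adf, h4, inv_mul_cancel₀ hβ0]
      · intro b hb hbne
        have h5 : b ≠ j - 1 := (Finset.mem_erase.mp hb).1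
        simp [adf, hbne, h5]
    calc adf j β m * ∏ i ∈ Finset.range m, ee i
        = ((∏ i ∈ Finset.range m, adf j β i) * adf j β m) *
            ∏ i ∈ Finset.range m, (if i = j - 2 then (r : ℂ) else 1) := by
          rw [h1]; ring
      _ = (∏ i ∈ Finset.range (m + 1), adf j β i) * (r : ℂ) := by
          rw [← Finset.prod_range_succ, h2]
      _ = (r : ℂ) := by rw [h3, one_mul]
  have hrow : ∀ k : Fin (m + 1), M (Fin.last m) k
      = (if (k : ℕ) = m then lam else 0) - adf j β m * Yef j r q 0 (k : ℕ) := by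
    intro k
    rw [hME]
    have : ¬ ((Fin.last m : ℕ) < m) := by simp
    rw [if_neg this]
    simp only [Fin.val_last, sub_eq_add_neg]
  rw [Matrix.det_succ_row M (Fin.last m)]
  have hsum : ∑ k : Fin (m + 1), (-1 : ℂ) ^ ((Fin.last m : ℕ) + (k : ℕ)) * M (Fin.last m) k *
        (M.submatrix (Fin.last m).succAbove k.succAbove).det
      = lam * (M.submatrix (Fin.last m).succAbove (Fin.last m).succAbove).det
        - ((-1) ^ (m : ℕ) * (adf j β m * (r : ℂ)) *
            (M.submatrix (Fin.last m).succAbove (0 : Fin (m + 1)).succAbove).det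
          + (-1) ^ (m + (j - 1)) * (adf j β m * (q : ℂ)) *
            (M.submatrix (Fin.last m).succAbove (⟨j - 1, hjf⟩ : Fin (m + 1)).succAbove).det) := by
    have step1 : ∀ k ∈ (Finset.univ : Finset (Fin (m + 1))),
        (-1 : ℂ) ^ ((Fin.last m : ℕ) + (k : ℕ)) * M (Fin.last m) k *
          (M.submatrix (Fin.last m).succAbove k.succAbove).det
        = (-1 : ℂ) ^ (m + (k : ℕ)) * ((if (k : ℕ) = m then lam else 0) *
            (M.submatrix (Fin.last m).succAbove k.succAbove).det)
          - (-1 : ℂ) ^ (m + (k : ℕ)) * ((adf j β m * Yef j r q 0 (k : ℕ)) *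
            (M.submatrix (Fin.last m).succAbove k.succAbove).det) := by
      intro k _
      rw [hrow k]
      simp only [Fin.val_last]
      ring
    rw [Finset.sum_congr rfl step1, Finset.sum_sub_distrib]
    have hS1 : ∑ k : Fin (m + 1), (-1 : ℂ) ^ (m + (k : ℕ)) * ((if (k : ℕ) = m then lam else 0) *
          (M.submatrix (Fin.last m).succAbove k.succAbove).det)
        = lam * (M.submatrix (Fin.last m).succAbove (Fin.last m).succAbove).det := by
      rw [Finset.sum_eq_single (Fin.last m)]
      · rw [Fin.val_last, if_pos rfl,
          show ((-1 : ℂ)) ^ (m + m) = 1 from Even.neg_one_pow ⟨m, rfl⟩]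
        ring
      · intro k _ hk
        have : (k : ℕ) ≠ m := by
          intro h
          exact hk (Fin.ext (by rw [h, Fin.val_last]))
        simp [this]
      · intro h
        exact absurd (Finset.mem_univ _) h
    have h0j : (0 : Fin (m + 1)) ≠ (⟨j - 1, hjf⟩ : Fin (m + 1)) := by
      intro h
      have := congrArg (fun x : Fin (m + 1) => (x : ℕ)) h
      simp at this
      omega
    have hY00 : Yef j r q 0 ((0 : Fin (m + 1)) : ℕ) = (r : ℂ) := by
      simp [Yef]
    have hY0j : Yef j r q 0 ((⟨j - 1, hjf⟩ : Fin (m + 1)) : ℕ) = (q : ℂ) := by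
      have h1 : (0 : ℕ) ≠ j - 1 := by omega
      simp [Yef, h1]
    have hS2 : ∑ k : Fin (m + 1), (-1 : ℂ) ^ (m + (k : ℕ)) *
          ((adf j β m * Yef j r q 0 (k : ℕ)) *
            (M.submatrix (Fin.last m).succAbove k.succAbove).det)
        = (-1) ^ (m : ℕ) * (adf j β m * (r : ℂ)) *
            (M.submatrix (Fin.last m).succAbove (0 : Fin (m + 1)).succAbove).det
          + (-1) ^ (m + (j - 1)) * (adf j β m * (q : ℂ)) *
            (M.submatrix (Fin.last m).succAbove (⟨j - 1, hjf⟩ : Fin (m + 1)).succAbove).det := by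
      rw [← Finset.sum_subset (Finset.subset_univ
          ({0, (⟨j - 1, hjf⟩ : Fin (m + 1))} : Finset (Fin (m + 1))))]
      · rw [Finset.sum_pair h0j, hY00, hY0j]
        norm_num
        try ring
      · intro k _ hk
        simp only [Finset.mem_insert, Finset.mem_singleton, not_or] at hk
        have hk0 : (k : ℕ) ≠ 0 := fun h => hk.1 (Fin.ext h)
        have hkj : (k : ℕ) ≠ j - 1 := fun h => hk.2 (Fin.ext h)
        have hz : Yef j r q 0 (k : ℕ) = 0 := by
          have h1 : (0 : ℕ) ≠ (k : ℕ) := fun h => hk0 h.symm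
          have h4 : (0 : ℕ) ≠ j - 1 := by omega
          simp [Yef, h1, hkj, h4]
        simp [hz]
    rw [hS1, hS2]
  rw [hsum, hminor_last, hminor_zero, hminor_j,
    det_Gmat (j - 1) (by omega) dd ee cc ee dd m hjm,
    hdetF m hjm, hdetF (j - 1) le_rfl]
  rw [Nat.sub_self, pow_zero, show m + 1 - j + 1 = m - (j - 1) + 1 by omega]
  have hev : ∀ a : ℕ, a % 2 = 0 → ((-1 : ℂ)) ^ a = 1 :=
    fun a ha => (Nat.even_iff.mpr ha).neg_one_pow
  have hod : ∀ a : ℕ, a % 2 = 1 → ((-1 : ℂ)) ^ a = -1 :=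
    fun a ha => (Nat.odd_iff.mpr ha).neg_one_pow
  obtain hj' | hj' := Nat.even_or_odd j
  · have hjp : j % 2 = 0 := Nat.even_iff.mp hj'
    obtain hm' | hm' := Nat.even_or_odd m
    · have hmp : m % 2 = 0 := Nat.even_iff.mp hm'
      rw [hev (j - 2) (by omega), hev m (by omega), hod (m + (j - 1)) (by omega),
        hod (j - 1) (by omega), hev (m - (j - 1) + 1) (by omega), hod (m + 1) (by omega)]
      linear_combination (-(r : ℂ)) * hprod_all +
        ((q : ℂ) * lam ^ (j - 1) - (q : ℂ) ^ 2 * β⁻¹) * hprod_tail -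
        (q : ℂ) ^ 2 * hββ - hrq'
    · have hmp : m % 2 = 1 := Nat.odd_iff.mp hm'
      rw [hev (j - 2) (by omega), hod m (by omega), hev (m + (j - 1)) (by omega),
        hod (j - 1) (by omega), hod (m - (j - 1) + 1) (by omega), hev (m + 1) (by omega)]
      linear_combination (r : ℂ) * hprod_all +
        (-(q : ℂ) * lam ^ (j - 1) + (q : ℂ) ^ 2 * β⁻¹) * hprod_tail +
        (q : ℂ) ^ 2 * hββ + hrq'
  · have hjp : j % 2 = 1 := Nat.odd_iff.mp hj'
    obtain hm' | hm' := Nat.even_or_odd m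
    · have hmp : m % 2 = 0 := Nat.even_iff.mp hm'
      rw [hod (j - 2) (by omega), hev m (by omega), hev (m + (j - 1)) (by omega),
        hev (j - 1) (by omega), hod (m - (j - 1) + 1) (by omega), hod (m + 1) (by omega)]
      linear_combination (-(r : ℂ)) * hprod_all +
        (-(q : ℂ) * lam ^ (j - 1) - (q : ℂ) ^ 2 * β⁻¹) * hprod_tail -
        (q : ℂ) ^ 2 * hββ - hrq'
    · have hmp : m % 2 = 1 := Nat.odd_iff.mp hm'
      rw [hod (j - 2) (by omega), hod m (by omega), hod (m + (j - 1)) (by omega),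
        hev (j - 1) (by omega), hev (m - (j - 1) + 1) (by omega), hev (m + 1) (by omega)]
      linear_combination (r : ℂ) * hprod_all +
        ((q : ℂ) * lam ^ (j - 1) + (q : ℂ) ^ 2 * β⁻¹) * hprod_tail +
        (q : ℂ) ^ 2 * hββ + hrq'
end
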